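/- arXiv:math/0505020 — 2 statements merged into one kernel-verified Lean document; each statement's English description precedes it below -/
import Mathlib

section
/- If π ∈ S_n has maximal down degree d_−(π) = ⌊n²/4⌋, then π has no decreasing subsequence of length 4. -/
open Equiv Finset

/-- Number of inversions (Coxeter length) of a permutation of `Fin n`. -/
def invNum {n : ℕ} (π : Equiv.Perm (Fin n)) : ℕ :=
  (Finset.univ.filter (fun p : Fin n × Fin n => p.1 < p.2 ∧ π p.2 < π p.1)).card

/-- Down degree: number of transpositions `t_{a,b}` with `ℓ(t_{a,b} π) = ℓ(π) - 1`. -/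
def downDeg {n : ℕ} (π : Equiv.Perm (Fin n)) : ℕ :=
  (Finset.univ.filter (fun p : Fin n × Fin n =>
    p.1 < p.2 ∧ invNum (Equiv.swap p.1 p.2 * π) + 1 = invNum π)).card

/-- Total degree: number of transpositions `t_{a,b}` with `ℓ(t_{a,b} π) = ℓ(π) ± 1`. -/
def totalDeg {n : ℕ} (π : Equiv.Perm (Fin n)) : ℕ :=
  (Finset.univ.filter (fun p : Fin n × Fin n =>
    p.1 < p.2 ∧ (invNum (Equiv.swap p.1 p.2 * π) + 1 = invNum π ∨
      invNum (Equiv.swap p.1 p.2 * π) = invNum π + 1))).card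

/-
Join two values `x < y` when swapping them in `π` removes exactly one inversion; `downDeg π`
counts the edges of this graph. An edge forces `y` to stand before `x` with no value between
them standing between them, so the graph is triangle-free and, by Mantel's theorem, has at most
`⌊n²/4⌋` edges. With equality it is Turán-maximal, hence complete bipartite: non-adjacency is an
equivalence relation. For a decreasing subsequence `a₁ > a₂ > a₃ > a₄` the pairs `(a₁, a₃)`,
`(a₂, a₄)`, `(a₁, a₄)` are non-edges, so `a₁, a₂, a₃` lie in one class, and a neighbour of `a₁`
would be adjacent to all three of them, which is impossible wherever its value lies.
-/

namespace SimpleGraph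

lemma card_edgeFinset_eq_card_filter_lt {α : Type*} [LinearOrder α] [Fintype α]
    (G : SimpleGraph α) [DecidableRel G.Adj] :
    #G.edgeFinset = #{p : α × α | p.1 < p.2 ∧ G.Adj p.1 p.2} := by
  symm
  refine card_nbij' (fun p => s(p.1, p.2)) (fun e => (e.inf, e.sup)) ?_ ?_ ?_ ?_
  · rintro ⟨a, b⟩ h
    simp_all
  · intro e he
    induction e with | _ a b =>
    rcases lt_or_gt_of_ne (G.ne_of_adj (by simpa using he)) with h | h <;>
      simp_all [h.le, G.adj_comm]
  · rintro ⟨a, b⟩ h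
    simp_all [le_of_lt]
  · intro e he
    induction e with | _ a b =>
    rcases le_total a b with h | h <;> simp [h, Sym2.eq_swap]

variable {V : Type*} [Fintype V] {G : SimpleGraph V} [DecidableRel G.Adj]

lemma card_edgeFinset_le_of_cliqueFree_three (hG : G.CliqueFree 3) :
    #G.edgeFinset ≤ Fintype.card V ^ 2 / 4 := by
  obtain ⟨H, _, hH⟩ := exists_isTuranMaximal (V := V) (r := 2) two_pos
  obtain ⟨f⟩ := hH.nonempty_iso_turanGraph
  have := mul_card_edgeFinset_turanGraph_le (n := Fintype.card V) (r := 2)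
  rw [Nat.le_div_iff_mul_le four_pos]
  calc #G.edgeFinset * 4 ≤ #H.edgeFinset * 4 := Nat.mul_le_mul_right 4 (hH.2 hG)
    _ ≤ _ := by rw [f.card_edgeFinset_eq]; omega

lemma isTuranMaximal_two_of_card_edgeFinset (hG : G.CliqueFree 3)
    (hcard : #G.edgeFinset = Fintype.card V ^ 2 / 4) : G.IsTuranMaximal 2 :=
  ⟨hG, fun _ _ hH => hcard ▸ card_edgeFinset_le_of_cliqueFree_three hH⟩

lemma IsTuranMaximal.exists_adj {r : ℕ} (hG : G.IsTuranMaximal r) (hne : G ≠ ⊥) (v : V) :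
    ∃ w, G.Adj w v := by
  obtain ⟨a, b, hab⟩ := ne_bot_iff_exists_adj.1 hne
  by_contra! h
  exact hG.not_adj_trans (h a) (fun h' => h b h'.symm) hab

end SimpleGraph

variable {n : ℕ}

def inversions (π : Perm (Fin n)) : Finset (Fin n × Fin n) :=
  {p | p.1 < p.2 ∧ π p.2 < π p.1}

@[simp] lemma mem_inversions {π : Perm (Fin n)} {p : Fin n × Fin n} :
    p ∈ inversions π ↔ p.1 < p.2 ∧ π p.2 < π p.1 := by
  simp [inversions]

/-- For `i < j` with `π i < π j`, this injects the inversions of `π` into those of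
`π * swap i j`, missing `(i, j)`. -/
def swapPair (i j : Fin n) (p : Fin n × Fin n) : Fin n × Fin n :=
  if swap i j p.1 < swap i j p.2 then (swap i j p.1, swap i j p.2) else p

lemma swapPair_mem_inversions {π : Perm (Fin n)} {i j : Fin n} (hij : i < j) (hv : π i < π j)
    {p : Fin n × Fin n} (hp : p ∈ inversions π) : swapPair i j p ∈ inversions (π * swap i j) := by
  obtain ⟨a, b⟩ := p
  rw [mem_inversions] at hp
  unfold swapPair
  split_ifs with hs
  · exact mem_inversions.2 ⟨hs, by simpa using hp.2⟩
  · refine mem_inversions.2 ⟨hp.1, ?_⟩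
    simp only [Perm.mul_apply] at hs ⊢
    rcases eq_or_ne a i with hai | hai <;> rcases eq_or_ne a j with haj | haj <;>
      rcases eq_or_ne b i with hbi | hbi <;> rcases eq_or_ne b j with hbj | hbj <;>
      simp_all [swap_apply_of_ne_of_ne] <;> order

lemma swapPair_injOn (i j : Fin n) : Set.InjOn (swapPair i j) {p | p.1 < p.2} := by
  rintro ⟨a, b⟩ (hab : a < b) ⟨c, d⟩ (hcd : c < d) h
  unfold swapPair at h
  split_ifs at h with h₁ h₂ h₂ <;>
    simp only [Prod.mk.injEq, EmbeddingLike.apply_eq_iff_eq] at h h₁ h₂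
  · rw [h.1, h.2]
  · rw [← h.1, ← h.2, swap_apply_self, swap_apply_self] at h₂; exact (h₂ hab).elim
  · rw [h.1, h.2, swap_apply_self, swap_apply_self] at h₁; exact (h₁ hcd).elim
  · rw [h.1, h.2]

lemma swapPair_ne_of_mem_inversions {π : Perm (Fin n)} {i j : Fin n} (hij : i < j)
    (hv : π i < π j) {p : Fin n × Fin n} (hp : p ∈ inversions π) : swapPair i j p ≠ (i, j) := by
  obtain ⟨a, b⟩ := p
  rw [mem_inversions] at hp
  unfold swapPair
  split_ifs with hs
  · simp only [ne_eq, Prod.mk.injEq, swap_apply_eq_iff, swap_apply_left, swap_apply_right]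
    rintro ⟨rfl, rfl⟩
    exact hij.not_gt hp.1
  · rintro ⟨⟩
    exact hv.not_gt hp.2

lemma invNum_lt_invNum_mul_swap {π : Perm (Fin n)} {i j : Fin n} (hij : i < j)
    (hv : π i < π j) : invNum π < invNum (π * swap i j) := by
  have hmaps : ∀ p ∈ inversions π, swapPair i j p ∈ (inversions (π * swap i j)).erase (i, j) :=
    fun p hp => mem_erase.2 ⟨swapPair_ne_of_mem_inversions hij hv hp,
      swapPair_mem_inversions hij hv hp⟩
  have hij_mem : (i, j) ∈ inversions (π * swap i j) := by simpa [hij]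
  calc invNum π = #(inversions π) := rfl
    _ ≤ #((inversions (π * swap i j)).erase (i, j)) :=
        card_le_card_of_injOn _ hmaps
          ((swapPair_injOn i j).mono fun p hp => (mem_inversions.1 hp).1)
    _ < invNum (π * swap i j) := card_erase_lt_of_mem hij_mem

lemma invNum_add_three_le_invNum_mul_swap {π : Perm (Fin n)} {i j k : Fin n} (hik : i < k)
    (hkj : k < j) (hvik : π i < π k) (hvkj : π k < π j) :
    invNum π + 3 ≤ invNum (π * swap i j) := by
  have hij := hik.trans hkj
  -- each of the three factors of `swap i j` swaps an ascending pair
  have hswap : swap i k * swap k j * swap i k = swap i j := by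
    rw [swap_comm i k, swap_comm k j, swap_mul_swap_mul_swap hkj.ne' hij.ne']
  have h₁ := invNum_lt_invNum_mul_swap hik hvik
  have h₂ := invNum_lt_invNum_mul_swap (π := π * swap i k) hkj
    (by simpa [swap_apply_of_ne_of_ne hij.ne' hkj.ne'] using hvik.trans hvkj)
  have h₃ := invNum_lt_invNum_mul_swap (π := π * swap i k * swap k j) hik
    (by simpa [swap_apply_of_ne_of_ne hik.ne hij.ne, swap_apply_of_ne_of_ne hij.ne' hkj.ne']
      using hvkj)
  rw [← hswap, ← mul_assoc, ← mul_assoc]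
  omega

def downGraph (π : Perm (Fin n)) : SimpleGraph (Fin n) :=
  SimpleGraph.fromRel fun x y => x < y ∧ invNum (swap x y * π) + 1 = invNum π

instance (π : Perm (Fin n)) : DecidableRel (downGraph π).Adj :=
  fun _ _ => inferInstanceAs (Decidable (_ ∧ _))

lemma downGraph_adj_of_lt {π : Perm (Fin n)} {x y : Fin n} (hxy : x < y) :
    (downGraph π).Adj x y ↔ invNum (swap x y * π) + 1 = invNum π := by
  simp [downGraph, hxy, hxy.ne, hxy.not_gt]

lemma downGraph_adj_apply_of_lt {π : Perm (Fin n)} {p q : Fin n} (hv : π p < π q) :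
    (downGraph π).Adj (π p) (π q) ↔ invNum (π * swap p q) + 1 = invNum π := by
  rw [downGraph_adj_of_lt hv, mul_swap_eq_swap_mul]

lemma lt_of_downGraph_adj {π : Perm (Fin n)} {p q : Fin n} (hv : π p < π q)
    (h : (downGraph π).Adj (π p) (π q)) : q < p := by
  rw [downGraph_adj_apply_of_lt hv] at h
  by_contra! hpq
  have := invNum_lt_invNum_mul_swap (hpq.lt_of_ne (by rintro rfl; exact hv.ne rfl)) hv
  omega

lemma not_downGraph_adj_of_decreasing {π : Perm (Fin n)} {p q r : Fin n} (hpq : p < q)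
    (hqr : q < r) (hqp : π q < π p) (hrq : π r < π q) : ¬ (downGraph π).Adj (π r) (π p) := by
  rw [downGraph_adj_apply_of_lt (hrq.trans hqp)]
  intro h
  have := invNum_add_three_le_invNum_mul_swap (π := π * swap r p) hpq hqr
    (by simpa [swap_apply_of_ne_of_ne hqr.ne hpq.ne'] using hrq)
    (by simpa [swap_apply_of_ne_of_ne hqr.ne hpq.ne'] using hqp)
  rw [mul_assoc, swap_comm p r, swap_mul_self, mul_one] at this
  omega

lemma downGraph_cliqueFree_three (π : Perm (Fin n)) : (downGraph π).CliqueFree 3 := by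
  intro s hs
  set e := s.orderEmbOfFin hs.card_eq
  have hadj (a b : Fin 3) (hab : a < b) : (downGraph π).Adj (e a) (e b) :=
    hs.isClique (orderEmbOfFin_mem s _ a) (orderEmbOfFin_mem s _ b) (e.injective.ne hab.ne)
  obtain ⟨p₀, hp₀⟩ := π.surjective (e 0)
  obtain ⟨p₁, hp₁⟩ := π.surjective (e 1)
  obtain ⟨p₂, hp₂⟩ := π.surjective (e 2)
  have h₀₁ : π p₀ < π p₁ := by rw [hp₀, hp₁]; exact e.strictMono (by decide)
  have h₁₂ : π p₁ < π p₂ := by rw [hp₁, hp₂]; exact e.strictMono (by decide)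
  have hp₁₀ := lt_of_downGraph_adj h₀₁ (by rw [hp₀, hp₁]; exact hadj 0 1 (by decide))
  have hp₂₁ := lt_of_downGraph_adj h₁₂ (by rw [hp₁, hp₂]; exact hadj 1 2 (by decide))
  exact not_downGraph_adj_of_decreasing hp₂₁ hp₁₀ h₁₂ h₀₁
    (by rw [hp₀, hp₂]; exact hadj 0 2 (by decide))

lemma downDeg_eq_card_edgeFinset (π : Perm (Fin n)) : downDeg π = #(downGraph π).edgeFinset := by
  rw [SimpleGraph.card_edgeFinset_eq_card_filter_lt, downDeg]
  refine congrArg card (filter_congr fun p _ => and_congr_right fun hp => ?_)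
  rw [downGraph_adj_of_lt hp]

lemma not_downGraph_adj_all_of_decreasing {π : Perm (Fin n)} {p q r : Fin n} (hpq : p < q)
    (hqr : q < r) (hqp : π q < π p) (hrq : π r < π q) (v : Fin n) :
    ¬ ((downGraph π).Adj v (π p) ∧ (downGraph π).Adj v (π q) ∧ (downGraph π).Adj v (π r)) := by
  rintro ⟨hp, hq, hr⟩
  obtain ⟨s, rfl⟩ := π.surjective v
  rcases lt_trichotomy (π s) (π r) with hsr | hsr | hrs
  · exact not_downGraph_adj_of_decreasing hqr (lt_of_downGraph_adj hsr hr) hrq hsr hq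
  · exact (downGraph π).loopless.irrefl _ (hsr ▸ hr)
  rcases lt_trichotomy (π s) (π q) with hsq | hsq | hqs
  · exact not_downGraph_adj_of_decreasing hpq (lt_of_downGraph_adj hsq hq) hqp hsq hp
  · exact (downGraph π).loopless.irrefl _ (hsq ▸ hq)
  · exact not_downGraph_adj_of_decreasing (lt_of_downGraph_adj hqs hq.symm) hqr hqs hrq hr.symm

theorem no_decreasing_four_of_max_downDeg {n : ℕ} (π : Equiv.Perm (Fin n))
    (h : downDeg π = n ^ 2 / 4) :
    ¬ ∃ i₁ i₂ i₃ i₄ : Fin n, i₁ < i₂ ∧ i₂ < i₃ ∧ i₃ < i₄ ∧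
      π i₂ < π i₁ ∧ π i₃ < π i₂ ∧ π i₄ < π i₃ := by
  rintro ⟨i₁, i₂, i₃, i₄, h₁₂, h₂₃, h₃₄, h₂₁, h₃₂, h₄₃⟩
  have hcard : #(downGraph π).edgeFinset = n ^ 2 / 4 := by rw [← downDeg_eq_card_edgeFinset, h]
  have hmax : (downGraph π).IsTuranMaximal 2 :=
    SimpleGraph.isTuranMaximal_two_of_card_edgeFinset (downGraph_cliqueFree_three π)
      (by rw [hcard, Fintype.card_fin])
  have hne : downGraph π ≠ ⊥ := by
    have hn : 4 ≤ n := by omega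
    rw [← SimpleGraph.edgeFinset_nonempty, ← card_pos, hcard]
    exact Nat.div_pos (by nlinarith) four_pos
  obtain ⟨v, hv₁⟩ := hmax.exists_adj hne (π i₁)
  have h₃₁ := not_downGraph_adj_of_decreasing h₁₂ h₂₃ h₂₁ h₃₂
  have h₄₂ := not_downGraph_adj_of_decreasing h₂₃ h₃₄ h₃₂ h₄₃
  have h₄₁ := not_downGraph_adj_of_decreasing (h₁₂.trans h₂₃) h₃₄ (h₃₂.trans h₂₁) h₄₃
  have hv₃ : (downGraph π).Adj v (π i₃) := by
    by_contra hv₃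
    exact hmax.not_adj_trans hv₃ h₃₁ hv₁
  have hv₂ : (downGraph π).Adj v (π i₂) := by
    by_contra hv₂
    exact hmax.not_adj_trans (hmax.not_adj_trans hv₂ fun h₂₄ => h₄₂ h₂₄.symm) h₄₁ hv₁
  exact not_downGraph_adj_all_of_decreasing h₁₂ h₂₃ h₂₁ h₃₂ v ⟨hv₁, hv₂, hv₃⟩
end

section
/- For every positive integer n, the average of the down degree over all permutations in S_n equals (n+1)·H_n − 2n, where H_n = Σ_{i=1}^n 1/i. -/
/-! Write `σ = π⁻¹`, so that `σ v` is the position of the value `v`. Multiplying `π` on the left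
by the transposition of the values `a < b` lowers the inversion number by exactly one iff, among
the values `a, …, b`, the value `a` stands immediately after `b` (in general the drop is
`1 + 2 · #{values strictly between a and b placed strictly between them}`). Relabelling by
transpositions shows that the elements of an `m`-set are equally often last, and that the other
elements are equally often immediately after a given one; hence `a` comes right after `b` for
exactly `n! / (b - a + 1)` permutations, and the expected down degree is
`∑_{a < b} 1 / (b - a + 1) = (n + 1) H_n - 2n`. -/

open Equiv Finset

section PairSums

variable {α M : Type*} [Fintype α] [DecidableEq α] [AddCommMonoid M]

theorem Fintype.sum_eq_add_add_sum_compl_pair {a b : α} (hab : a ≠ b) (f : α → M) :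
    ∑ x, f x = f a + f b + ∑ x ∈ {a, b}ᶜ, f x := by
  rw [← sum_add_sum_compl {a, b} f, sum_pair hab]

theorem Fintype.sum_sum_eq_of_eq_zero_off_pair {a b : α} (hab : a ≠ b) (h : α → α → M)
    (hzero : ∀ x ∈ ({a, b} : Finset α)ᶜ, ∀ y ∈ ({a, b} : Finset α)ᶜ, h x y = 0) :
    ∑ x, ∑ y, h x y =
      h a a + h a b + h b a + h b b + ∑ c ∈ {a, b}ᶜ, (h a c + h b c + h c a + h c b) := by
  have hrow : ∀ x ∈ ({a, b} : Finset α)ᶜ, ∑ y, h x y = h x a + h x b := fun x hx => by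
    rw [Fintype.sum_eq_add_add_sum_compl_pair hab, Finset.sum_eq_zero (hzero x hx), add_zero]
  simp only [Fintype.sum_eq_add_add_sum_compl_pair hab (fun x => ∑ y, h x y),
    Finset.sum_congr rfl hrow, Fintype.sum_eq_add_add_sum_compl_pair hab (h a),
    Fintype.sum_eq_add_add_sum_compl_pair hab (h b), sum_add_distrib]
  abel

end PairSums

theorem Finset.forall_mem_swap_apply_iff {α : Type*} [DecidableEq α] {s : Finset α} {x y : α}
    (hx : x ∈ s) (hy : y ∈ s) (P : α → Prop) : (∀ z ∈ s, P (swap x y z)) ↔ ∀ z ∈ s, P z := by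
  have hmaps : Set.MapsTo (swap x y) s s := (swap_bijOn_self (iff_of_true hx hy)).mapsTo
  refine ⟨fun h z hz => ?_, fun h z hz => h _ (hmaps hz)⟩
  simpa using h _ (hmaps hz)

theorem Equiv.Perm.card_filter_mul_right {α : Type*} [Fintype α] [DecidableEq α]
    (P : Perm α → Prop) [DecidablePred P] (τ : Perm α) : #{σ | P (σ * τ)} = #{σ | P σ} :=
  card_equiv (Equiv.mulRight τ) (by simp)

section Successor

variable {α : Type*} [LinearOrder α]

/- `σ z` is read as the position of `z`: `IsLastIn s σ x` says that `x` comes last among the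
elements of `s`, and `IsNextIn s σ x y` that `y` comes right after `x` among them. -/

def IsLastIn (s : Finset α) (σ : Perm α) (x : α) : Prop :=
  ∀ z ∈ s, σ z ≤ σ x

def IsNextIn (s : Finset α) (σ : Perm α) (x y : α) : Prop :=
  σ x < σ y ∧ ∀ z ∈ s, ¬(σ x < σ z ∧ σ z < σ y)

instance (s : Finset α) (σ : Perm α) (x : α) : Decidable (IsLastIn s σ x) :=
  inferInstanceAs (Decidable (∀ z ∈ s, _))

instance (s : Finset α) (σ : Perm α) (x y : α) : Decidable (IsNextIn s σ x y) :=
  inferInstanceAs (Decidable (_ ∧ ∀ z ∈ s, _))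

variable {s : Finset α}

theorem isLastIn_mul_swap_iff {x y : α} (hx : x ∈ s) (hy : y ∈ s) (σ : Perm α) :
    IsLastIn s (σ * swap x y) x ↔ IsLastIn s σ y := by
  simp only [IsLastIn, Perm.mul_apply, swap_apply_left]
  exact forall_mem_swap_apply_iff hx hy (σ · ≤ σ y)

theorem isNextIn_mul_swap_iff {x y y' : α} (hy : y ∈ s) (hy' : y' ∈ s) (hxy : x ≠ y)
    (hxy' : x ≠ y') (σ : Perm α) :
    IsNextIn s (σ * swap y y') x y ↔ IsNextIn s σ x y' := by
  simp only [IsNextIn, Perm.mul_apply, swap_apply_left, swap_apply_of_ne_of_ne hxy hxy']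
  rw [forall_mem_swap_apply_iff hy hy' fun z => ¬(σ x < σ z ∧ σ z < σ y')]

theorem card_filter_isLastIn (hs : s.Nonempty) (σ : Perm α) : #{x ∈ s | IsLastIn s σ x} = 1 := by
  obtain ⟨x, hx, hmax⟩ := s.exists_max_image σ hs
  refine card_eq_one.mpr ⟨x, eq_singleton_iff_unique_mem.mpr ⟨mem_filter.mpr ⟨hx, hmax⟩, ?_⟩⟩
  intro y hy
  rw [mem_filter] at hy
  exact σ.injective (le_antisymm (hmax y hy.1) (hy.2 x hx))

theorem card_filter_isNextIn (x : α) (σ : Perm α) :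
    #{y ∈ s | IsNextIn s σ x y} = if IsLastIn s σ x then 0 else 1 := by
  split_ifs with hlast
  · refine card_eq_zero.mpr (filter_eq_empty_iff.mpr fun y hy hnext => ?_)
    exact (hnext.1.trans_le (hlast y hy)).false
  · obtain ⟨z, hz, hxz⟩ : ∃ z ∈ s, σ x < σ z := by simpa [IsLastIn] using hlast
    obtain ⟨y, hy, hmin⟩ := (s.filter (σ x < σ ·)).exists_min_image σ ⟨z, mem_filter.mpr ⟨hz, hxz⟩⟩
    rw [mem_filter] at hy
    have hnext : IsNextIn s σ x y :=
      ⟨hy.2, fun w hw hbetween => (hmin w (mem_filter.mpr ⟨hw, hbetween.1⟩)).not_gt hbetween.2⟩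
    refine card_eq_one.mpr ⟨y, eq_singleton_iff_unique_mem.mpr ⟨mem_filter.mpr ⟨hy.1, hnext⟩, ?_⟩⟩
    intro w hw
    rw [mem_filter] at hw
    refine σ.injective (le_antisymm ?_ ?_)
    · exact not_lt.mp fun h => hw.2.2 y hy.1 ⟨hnext.1, h⟩
    · exact not_lt.mp fun h => hnext.2 w hw.1 ⟨hw.2.1, h⟩

variable [Fintype α]

theorem card_mul_card_isLastIn {x : α} (hx : x ∈ s) :
    #s * #{σ : Perm α | IsLastIn s σ x} = Fintype.card (Perm α) := by
  have hsymm : ∀ y ∈ s, #{σ : Perm α | IsLastIn s σ y} = #{σ : Perm α | IsLastIn s σ x} :=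
    fun y hy => (Perm.card_filter_mul_right (IsLastIn s · y) (swap y x)).symm.trans
      (congrArg card (filter_congr fun σ _ => isLastIn_mul_swap_iff hy hx σ))
  calc #s * #{σ : Perm α | IsLastIn s σ x}
      = ∑ y ∈ s, #{σ : Perm α | IsLastIn s σ y} := by
        rw [sum_congr rfl hsymm, sum_const, smul_eq_mul]
    _ = ∑ σ : Perm α, #{y ∈ s | IsLastIn s σ y} :=
        sum_card_bipartiteAbove_eq_sum_card_bipartiteBelow (fun y σ => IsLastIn s σ y)
    _ = Fintype.card (Perm α) := by
        simp [card_filter_isLastIn ⟨x, hx⟩]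

theorem card_mul_card_isNextIn {x y : α} (hx : x ∈ s) (hy : y ∈ s) (hxy : x ≠ y) :
    #s * #{σ : Perm α | IsNextIn s σ x y} = Fintype.card (Perm α) := by
  set A := #{σ : Perm α | IsNextIn s σ x y}
  set L := #{σ : Perm α | IsLastIn s σ x}
  have hsymm : ∀ y' ∈ s.erase x, #{σ : Perm α | IsNextIn s σ x y'} = A := fun y' hy' =>
    (Perm.card_filter_mul_right (IsNextIn s · x y') (swap y' y)).symm.trans <| congrArg card <|
      filter_congr fun σ _ =>
        isNextIn_mul_swap_iff (mem_of_mem_erase hy') hy (ne_of_mem_erase hy').symm hxy σ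
  have hself : #{σ : Perm α | IsNextIn s σ x x} = 0 :=
    card_eq_zero.mpr (filter_eq_empty_iff.mpr fun σ _ h => h.1.false)
  have hsplit : (#s - 1) * A + L = Fintype.card (Perm α) :=
    calc (#s - 1) * A + L
        = ∑ y' ∈ s, #{σ : Perm α | IsNextIn s σ x y'} + L := by
          rw [← sum_erase_add _ _ hx, hself, add_zero, sum_congr rfl hsymm, sum_const,
            card_erase_of_mem hx, smul_eq_mul]
      _ = ∑ σ : Perm α, #{y' ∈ s | IsNextIn s σ x y'} + L := by
          congr 1
          exact sum_card_bipartiteAbove_eq_sum_card_bipartiteBelow (fun y' σ => IsNextIn s σ x y')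
      _ = #{σ : Perm α | ¬IsLastIn s σ x} + L := by
          rw [card_filter]
          simp only [card_filter_isNextIn, ite_not]
      _ = Fintype.card (Perm α) := by
          rw [add_comm, card_filter_add_card_filter_not, card_univ]
  have hlast : #s * L = Fintype.card (Perm α) := card_mul_card_isLastIn hx
  have hs : 1 < #s := one_lt_card.mpr ⟨x, hx, y, hy, hxy⟩
  refine Nat.eq_of_mul_eq_mul_left (Nat.sub_pos_of_lt hs) ?_
  calc (#s - 1) * (#s * A) = #s * ((#s - 1) * A + L) - #s * L := by
        rw [mul_add, Nat.add_sub_cancel]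
        ring
    _ = (#s - 1) * Fintype.card (Perm α) := by rw [hsplit, hlast, ← Nat.sub_one_mul]

end Successor

section Inversions

variable {n : ℕ}

theorem invNum_inv (σ : Perm (Fin n)) : invNum σ⁻¹ = invNum σ := by
  refine card_nbij' (fun p => (σ⁻¹ p.2, σ⁻¹ p.1)) (fun p => (σ p.2, σ p.1)) ?_ ?_ ?_ ?_ <;>
    intro p <;> simp +contextual

theorem invNum_eq_sum (σ : Perm (Fin n)) :
    (invNum σ : ℤ) = ∑ x, ∑ y, if x < y ∧ σ y < σ x then 1 else 0 := by
  rw [invNum, card_filter, Nat.cast_sum, Fintype.sum_prod_type]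
  push_cast
  rfl

theorem invNum_mul_eq_sum (σ τ : Perm (Fin n)) :
    (invNum (σ * τ) : ℤ) = ∑ x, ∑ y, if τ⁻¹ x < τ⁻¹ y ∧ σ y < σ x then 1 else 0 := by
  rw [invNum_eq_sum, ← Equiv.sum_comp τ⁻¹]
  refine Fintype.sum_congr _ _ fun x => ?_
  rw [← Equiv.sum_comp τ⁻¹]
  simp

theorem invNum_eq_invNum_mul_swap_add (σ : Perm (Fin n)) {a b : Fin n} (hab : a < b)
    (hσ : σ b < σ a) :
    invNum σ = invNum (σ * swap a b) + 1 + 2 * #{c ∈ Icc a b | σ b < σ c ∧ σ c < σ a} := by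
  set δ : Fin n → Fin n → ℤ := fun x y =>
    (if x < y ∧ σ y < σ x then 1 else 0) - if swap a b x < swap a b y ∧ σ y < σ x then 1 else 0
  have hdiff : (invNum σ : ℤ) - invNum (σ * swap a b) = ∑ x, ∑ y, δ x y := by
    rw [invNum_eq_sum σ, invNum_mul_eq_sum, swap_inv]
    simp only [δ, ← sum_sub_distrib]
  have hthird : ∀ c ∈ ({a, b} : Finset (Fin n))ᶜ, δ a c + δ b c + δ c a + δ c b =
      2 * if c ∈ Icc a b ∧ σ b < σ c ∧ σ c < σ a then 1 else 0 := by
    intro c hc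
    simp only [mem_compl, mem_insert, mem_singleton, not_or] at hc
    have hσa : σ c ≠ σ a := σ.injective.ne hc.1
    have hσb : σ c ≠ σ b := σ.injective.ne hc.2
    simp only [δ, swap_apply_left, swap_apply_right, swap_apply_of_ne_of_ne hc.1 hc.2, mem_Icc]
    grind
  have hzero : ∀ x ∈ ({a, b} : Finset (Fin n))ᶜ, ∀ y ∈ ({a, b} : Finset (Fin n))ᶜ, δ x y = 0 := by
    intro x hx y hy
    simp only [mem_compl, mem_insert, mem_singleton, not_or] at hx hy
    simp [δ, swap_apply_of_ne_of_ne hx.1 hx.2, swap_apply_of_ne_of_ne hy.1 hy.2]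
  have hcount : ∑ c ∈ ({a, b} : Finset (Fin n))ᶜ,
      (if c ∈ Icc a b ∧ σ b < σ c ∧ σ c < σ a then (1 : ℤ) else 0) =
        #{c ∈ Icc a b | σ b < σ c ∧ σ c < σ a} := by
    rw [sum_boole]
    congr 2
    ext c
    simp only [mem_filter, mem_compl, mem_insert, mem_singleton]
    grind
  have hcorners : δ a a + δ a b + δ b a + δ b b = 1 := by
    simp [δ, hab, hσ, hab.not_gt, hσ.not_gt]
  rw [Fintype.sum_sum_eq_of_eq_zero_off_pair hab.ne δ hzero, Finset.sum_congr rfl hthird,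
    ← mul_sum, hcount, hcorners] at hdiff
  omega

theorem invNum_mul_swap_add_one_eq_iff (σ : Perm (Fin n)) {a b : Fin n} (hab : a < b) :
    invNum (σ * swap a b) + 1 = invNum σ ↔ IsNextIn (Icc a b) σ b a := by
  rcases (σ.injective.ne hab.ne).lt_or_gt with hlt | hgt
  · have hup := invNum_eq_invNum_mul_swap_add (σ * swap a b) hab (by simpa using hlt)
    rw [mul_swap_mul_self] at hup
    exact iff_of_false (by omega) fun hnext => hlt.not_gt hnext.1
  · rw [invNum_eq_invNum_mul_swap_add σ hab hgt, IsNextIn]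
    simp [hgt, card_eq_zero, filter_eq_empty_iff]

theorem card_mul_card_invNum_swap_mul_add_one_eq {a b : Fin n} (hab : a < b) :
    ((b : ℕ) + 1 - a) * #{π : Perm (Fin n) | invNum (swap a b * π) + 1 = invNum π} =
      n.factorial := by
  have hinv : #{π : Perm (Fin n) | invNum (swap a b * π) + 1 = invNum π} =
      #{σ : Perm (Fin n) | IsNextIn (Icc a b) σ b a} :=
    card_equiv (Equiv.inv _) fun π => by
      simp [← invNum_mul_swap_add_one_eq_iff π⁻¹ hab, ← invNum_inv (swap a b * π), invNum_inv]
  rw [hinv, ← Fin.card_Icc, card_mul_card_isNextIn (right_mem_Icc.mpr hab.le)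
    (left_mem_Icc.mpr hab.le) hab.ne', Fintype.card_perm, Fintype.card_fin]

end Inversions

theorem sum_range_inv_succ_sub (b : ℕ) :
    ∑ a ∈ range b, ((b + 1 - a : ℕ) : ℚ)⁻¹ = harmonic (b + 1) - 1 := by
  rw [← sum_range_reflect, harmonic, sum_range_succ']
  simp only [Nat.cast_add, Nat.cast_one, zero_add, inv_one, add_sub_cancel_right]
  refine sum_congr rfl fun a ha => ?_
  rw [mem_range] at ha
  rw [show b + 1 - (b - 1 - a) = a + 1 + 1 by omega]
  push_cast
  rfl

theorem sum_range_sum_range_inv_succ_sub (n : ℕ) :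
    ∑ b ∈ range n, ∑ a ∈ range b, ((b + 1 - a : ℕ) : ℚ)⁻¹ = (n + 1) * harmonic n - 2 * n := by
  induction n with
  | zero => simp
  | succ n ih =>
    rw [sum_range_succ, ih, sum_range_inv_succ_sub, harmonic_succ]
    push_cast
    field_simp
    ring

theorem sum_fin_sum_fin_inv_succ_sub (n : ℕ) :
    ∑ a : Fin n, ∑ b : Fin n, (if a < b then (((b : ℕ) + 1 - a : ℕ) : ℚ)⁻¹ else 0) =
      (n + 1) * harmonic n - 2 * n := by
  rw [sum_comm, ← sum_range_sum_range_inv_succ_sub, ← Fin.sum_univ_eq_sum_range]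
  refine sum_congr rfl fun b _ => ?_
  refine (Fin.sum_univ_eq_sum_range (fun a => if a < b then (((b : ℕ) + 1 - a : ℕ) : ℚ)⁻¹ else 0)
    n).trans ?_
  rw [← sum_filter]
  congr 1
  ext a
  simp only [mem_filter, mem_range]
  omega

theorem expected_downDeg_general {n : ℕ} :
    (∑ π : Equiv.Perm (Fin n), (downDeg π : ℚ)) / (Nat.factorial n : ℚ) =
      (n + 1) * (∑ i ∈ Finset.Icc 1 n, (1 : ℚ) / i) - 2 * n := by
  have hdouble : ∑ π : Perm (Fin n), downDeg π = ∑ p : Fin n × Fin n,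
      #{π : Perm (Fin n) | p.1 < p.2 ∧ invNum (swap p.1 p.2 * π) + 1 = invNum π} :=
    sum_card_bipartiteAbove_eq_sum_card_bipartiteBelow _
  have hpair : ∀ a b : Fin n,
      (#{π : Perm (Fin n) | a < b ∧ invNum (swap a b * π) + 1 = invNum π} : ℚ) / n.factorial =
        if a < b then (((b : ℕ) + 1 - a : ℕ) : ℚ)⁻¹ else 0 := by
    intro a b
    split_ifs with hab
    · have hcount := card_mul_card_invNum_swap_mul_add_one_eq hab
      simp only [hab, true_and]
      rw [div_eq_iff (by positivity), ← hcount]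
      have hm : ((b : ℕ) + 1 - a : ℕ) ≠ 0 := by omega
      push_cast
      field_simp
    · simp [hab]
  rw [← Nat.cast_sum, hdouble, Nat.cast_sum, sum_div, Fintype.sum_prod_type]
  simp only [hpair, sum_fin_sum_fin_inv_succ_sub, one_div, ← harmonic_eq_sum_Icc]

theorem expected_downDeg {n : ℕ} (hn : 0 < n) :
    (∑ π : Equiv.Perm (Fin n), (downDeg π : ℚ)) / (Nat.factorial n : ℚ) =
      (n + 1) * (∑ i ∈ Finset.Icc 1 n, (1 : ℚ) / i) - 2 * n :=
  expected_downDeg_general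
end
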